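/- arXiv:2403.07256 — 4 statements merged into one kernel-verified Lean document; each statement's English description precedes it below -/
import Mathlib

section
/- Let f : ℝ → ℝ⁺ be a function such that (i) f(0) = A and f(1) = A·B for some constants A, B > 0; (ii) for all r, s ≥ 0 with ⌊r⌋ = ⌊s⌋ one has f(r)·f(s) = f(r+s)·f(0); and (iii) there exists C ∈ (0,∞) such that for all r, s ≥ 0 with |r − s| ≤ 1 one has f(r)/f(s) ∈ (1/C, C). Then for all r > 0, f(r) = A·B^r. -/
/-!
Write `f x = f 0 * B ^ x * exp (g x)`. The functional equation says that `g` is additive on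
pairs with equal integer parts, and `g 0 = g 1 = 0`; comparability bounds `g` on `[0, 1)`.
Doubling gives `g (1 / 2) = 0`, and then every value of `g` on `[0, 1)` is half another one:
`g y = g (2 * y) / 2` for `y < 1 / 2` and `g y = g (y - 1 / 2) = g (2 * y - 1) / 2` otherwise.
A bounded function with this property vanishes, and doubling spreads `g = 0` to `[0, ∞)`.
-/

open Real Set Filter Topology

theorem eq_zero_of_abs_le_of_forall_exists_half {α : Type*} {g : α → ℝ} {S : Set α} {M : ℝ}
    (hM : ∀ x ∈ S, |g x| ≤ M) (hhalf : ∀ y ∈ S, ∃ x ∈ S, g y = g x / 2) :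
    ∀ y ∈ S, g y = 0 := by
  have hbound : ∀ n : ℕ, ∀ y ∈ S, |g y| ≤ M / 2 ^ n := by
    intro n
    induction n with
    | zero => simpa using hM
    | succ n ih =>
      intro y hy
      obtain ⟨x, hx, hyx⟩ := hhalf y hy
      rw [hyx, abs_div, abs_two, pow_succ, ← div_div]
      exact div_le_div_of_nonneg_right (ih x hx) zero_le_two
  intro y hy
  have hlim : Tendsto (fun n : ℕ => M / 2 ^ n) atTop (𝓝 0) :=
    tendsto_const_nhds.div_atTop (tendsto_pow_atTop_atTop_of_one_lt one_lt_two)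
  exact abs_nonpos_iff.mp (ge_of_tendsto' hlim fun n => hbound n y hy)

def FloorAdditive (g : ℝ → ℝ) : Prop :=
  ∀ r s : ℝ, 0 ≤ r → 0 ≤ s → ⌊r⌋ = ⌊s⌋ → g (r + s) = g r + g s

namespace FloorAdditive

variable {g : ℝ → ℝ}

theorem map_two_mul (hg : FloorAdditive g) {x : ℝ} (hx : 0 ≤ x) : g (2 * x) = 2 * g x := by
  rw [two_mul, two_mul, hg x x hx hx rfl]

theorem map_two_pow_mul (hg : FloorAdditive g) (n : ℕ) {x : ℝ} (hx : 0 ≤ x) :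
    g (2 ^ n * x) = 2 ^ n * g x := by
  induction n with
  | zero => simp
  | succ n ih => rw [pow_succ', mul_assoc, hg.map_two_mul (by positivity), ih, mul_assoc]

theorem map_add_of_mem_Ico (hg : FloorAdditive g) {r s : ℝ} (hr : r ∈ Ico (0 : ℝ) 1)
    (hs : s ∈ Ico (0 : ℝ) 1) : g (r + s) = g r + g s :=
  hg r s hr.1 hs.1 <| by
    rw [Int.floor_eq_zero_iff.mpr hr, Int.floor_eq_zero_iff.mpr hs]

theorem exists_half_of_map_one (hg : FloorAdditive g) (h1 : g 1 = 0) :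
    ∀ y ∈ Ico (0 : ℝ) 1, ∃ x ∈ Ico (0 : ℝ) 1, g y = g x / 2 := by
  have hhalf : g (1 / 2) = 0 := by
    have := hg.map_two_mul (x := 1 / 2) (by norm_num)
    rw [mul_one_div_cancel two_ne_zero, h1] at this
    linarith
  rintro y ⟨hy0, hy1⟩
  rcases lt_or_ge y (1 / 2) with hy | hy
  · refine ⟨2 * y, ⟨by linarith, by linarith⟩, ?_⟩
    rw [hg.map_two_mul hy0]
    ring
  · refine ⟨2 * (y - 1 / 2), ⟨by linarith, by linarith⟩, ?_⟩
    have hsplit := hg.map_add_of_mem_Ico (r := y - 1 / 2) (s := 1 / 2)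
      ⟨by linarith, by linarith⟩ ⟨by norm_num, by norm_num⟩
    rw [sub_add_cancel, hhalf, add_zero] at hsplit
    rw [hg.map_two_mul (by linarith), hsplit]
    ring

theorem eq_zero_of_abs_le (hg : FloorAdditive g) (h1 : g 1 = 0) {M : ℝ}
    (hM : ∀ x ∈ Ico (0 : ℝ) 1, |g x| ≤ M) {x : ℝ} (hx : 0 ≤ x) : g x = 0 := by
  have hIco := eq_zero_of_abs_le_of_forall_exists_half hM (hg.exists_half_of_map_one h1)
  obtain ⟨n, hn⟩ := pow_unbounded_of_one_lt x one_lt_two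
  have h2n : (0 : ℝ) < 2 ^ n := by positivity
  have hxn : x / 2 ^ n ∈ Ico (0 : ℝ) 1 := ⟨by positivity, (div_lt_one h2n).mpr hn⟩
  rw [← mul_div_cancel₀ x h2n.ne', hg.map_two_pow_mul n hxn.1, hIco _ hxn, mul_zero]

end FloorAdditive

noncomputable def logDefect (f : ℝ → ℝ) (L x : ℝ) : ℝ :=
  log (f x) - log (f 0) - x * L

theorem floorAdditive_logDefect {f : ℝ → ℝ} (hpos : ∀ r, 0 < f r)
    (hadd : ∀ r s : ℝ, 0 ≤ r → 0 ≤ s → ⌊r⌋ = ⌊s⌋ → f r * f s = f (r + s) * f 0) (L : ℝ) :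
    FloorAdditive (logDefect f L) := by
  intro r s hr hs hrs
  have hlog := congrArg log (hadd r s hr hs hrs)
  rw [log_mul (hpos r).ne' (hpos s).ne', log_mul (hpos _).ne' (hpos 0).ne'] at hlog
  simp only [logDefect]
  linarith

theorem abs_log_lt_log_of_mem_Ioo {a C : ℝ} (ha : 0 < a) (h : a ∈ Ioo (1 / C) C) :
    |log a| < log C := by
  have hC : 0 < C := ha.trans h.2
  have hlo := log_lt_log (by positivity) h.1
  rw [one_div, log_inv] at hlo
  exact abs_lt.mpr ⟨hlo, log_lt_log ha h.2⟩

theorem abs_logDefect_le {f : ℝ → ℝ} (hpos : ∀ r, 0 < f r) {C : ℝ}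
    (hC : ∀ r s : ℝ, 0 ≤ r → 0 ≤ s → |r - s| ≤ 1 → f r / f s ∈ Ioo (1 / C) C) (L : ℝ) :
    ∀ x ∈ Ico (0 : ℝ) 1, |logDefect f L x| ≤ log C + |L| := by
  rintro x ⟨hx0, hx1⟩
  have hratio := abs_log_lt_log_of_mem_Ioo (div_pos (hpos x) (hpos 0))
    (hC x 0 hx0 le_rfl (by rw [sub_zero, abs_of_nonneg hx0]; exact hx1.le))
  rw [log_div (hpos x).ne' (hpos 0).ne'] at hratio
  have hlin : |x * L| ≤ |L| := by
    rw [abs_mul, abs_of_nonneg hx0]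
    exact mul_le_of_le_one_left (abs_nonneg L) hx1.le
  calc |logDefect f L x| ≤ |log (f x) - log (f 0)| + |x * L| := abs_sub _ _
    _ ≤ log C + |L| := add_le_add hratio.le hlin

theorem functional_equation_general
    (f : ℝ → ℝ) (A B : ℝ) (hB : 0 < B)
    (hfpos : ∀ r : ℝ, 0 < f r)
    (hf0 : f 0 = A) (hf1 : f 1 = A * B)
    (hadd : ∀ r s : ℝ, 0 ≤ r → 0 ≤ s → ⌊r⌋ = ⌊s⌋ → f r * f s = f (r + s) * f 0)
    (hcomp : ∃ C : ℝ, 0 < C ∧ ∀ r s : ℝ, 0 ≤ r → 0 ≤ s → |r - s| ≤ 1 →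
      f r / f s ∈ Set.Ioo (1 / C) C) :
    ∀ r : ℝ, 0 < r → f r = A * B ^ r := by
  obtain ⟨C, -, hC⟩ := hcomp
  have hA : 0 < A := hf0 ▸ hfpos 0
  have hg1 : logDefect f (log B) 1 = 0 := by
    simp [logDefect, hf0, hf1, log_mul hA.ne' hB.ne']
  intro r hr
  have hgr := (floorAdditive_logDefect hfpos hadd (log B)).eq_zero_of_abs_le hg1
    (abs_logDefect_le hfpos hC (log B)) hr.le
  have hlog : log (f r) = log A + r * log B := by
    simp only [logDefect, hf0] at hgr
    linarith
  rw [← exp_log (hfpos r), hlog, exp_add, exp_log hA, rpow_def_of_pos hB, mul_comm r]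

/-- Functional equation proposition: a positive function with prescribed boundary
values, local logarithmic additivity on intervals with equal floor, and
comparability at unit distance, must be `A * B ^ r`. -/
theorem functional_equation
    (f : ℝ → ℝ) (A B : ℝ) (hA : 0 < A) (hB : 0 < B)
    (hfpos : ∀ r : ℝ, 0 < f r)
    (hf0 : f 0 = A) (hf1 : f 1 = A * B)
    (hadd : ∀ r s : ℝ, 0 ≤ r → 0 ≤ s → ⌊r⌋ = ⌊s⌋ → f r * f s = f (r + s) * f 0)
    (hcomp : ∃ C : ℝ, 0 < C ∧ ∀ r s : ℝ, 0 ≤ r → 0 ≤ s → |r - s| ≤ 1 →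
      f r / f s ∈ Set.Ioo (1 / C) C) :
    ∀ r : ℝ, 0 < r → f r = A * B ^ r :=
  functional_equation_general f A B hB hfpos hf0 hf1 hadd hcomp
end

section
/- Suppose f : ℝ → ℝ⁺ satisfies f(r)·f(s) = f(r+s)·f(0) for all r, s ≥ 0 with ⌊r⌋ = ⌊s⌋, and suppose f(r) = A·B^r holds for all r ∈ (0, 1] and r = 0 (with A = f(0) > 0 and B > 0). Then f(r) = A·B^r for all r > 0. -/
/-- Extension step: if `f` satisfies the local logarithmic additivity on intervals
with equal floor and `f(r) = A B^r` holds for `r ∈ (0,1]` and `r = 0`, then it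
holds for all `r > 0`. -/
theorem extension_from_unit_interval
    (f : ℝ → ℝ) (A B : ℝ) (hB : 0 < B)
    (hfpos : ∀ r : ℝ, 0 < f r)
    (hadd : ∀ r s : ℝ, 0 ≤ r → 0 ≤ s → ⌊r⌋ = ⌊s⌋ → f r * f s = f (r + s) * f 0)
    (hf0 : f 0 = A) (hA : 0 < A)
    (hunit : ∀ r : ℝ, r ∈ Set.Ioc (0 : ℝ) 1 → f r = A * B ^ r) :
    ∀ r : ℝ, 0 < r → f r = A * B ^ r := by
  have key : ∀ n : ℕ, ∀ r : ℝ, 0 < r → r ≤ n + 1 → f r = A * B ^ r := by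
    intro n
    induction n with
    | zero => intro r hr hr1; exact hunit r ⟨hr, by simpa using hr1⟩
    | succ n ih =>
      intro r hr hr1
      by_cases h : r ≤ n + 1
      · exact ih r hr h
      · have ht : 0 < r / 2 := by linarith
        have ht1 : r / 2 ≤ n + 1 := by
          push_cast at hr1 ⊢; linarith
        have heq := hadd (r / 2) (r / 2) ht.le ht.le rfl
        have h2 : r / 2 + r / 2 = r := by ring
        rw [h2, hf0, ih (r / 2) ht ht1] at heq
        have hBr : B ^ (r / 2) * B ^ (r / 2) = B ^ r := by
          rw [← Real.rpow_add hB]; ring_nf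
        have : f r * A = A * B ^ r * A := by
          rw [← heq]; rw [mul_mul_mul_comm, hBr]; ring
        exact mul_right_cancel₀ hA.ne' this
  intro r hr
  obtain ⟨n, hn⟩ := exists_nat_ge r
  exact key n r hr (by linarith)
end

section
/- Let x ∈ ℝ³, r > 0, 0 < ε < 10⁻⁵·r, and let b ≥ 10⁶ and a > b be such that ε^b·ε^(b/20) ≥ 2·r·ε^a + ε^(2b) (which holds for a sufficiently large relative to b). Let y ∈ ∂B(x, r) be a point with y₃ ≤ x₃ and dist(y, ℓ) ≥ ε^(b/20), where ℓ = {z ∈ ∂B(x, r) : z₃ = x₃}. Then y + (0, 0, ε^b) ∈ B(x, r − ε^a). -/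
/-- The equator of the sphere `∂B(x,r)` in `ℝ³`. -/
def equator (x : EuclideanSpace ℝ (Fin 3)) (r : ℝ) : Set (EuclideanSpace ℝ (Fin 3)) :=
  {y | y ∈ Metric.sphere x r ∧ y 2 = x 2}

/-!
Write `y - x = w + h • e` with `w ⟂ e` and `h = ⟪y - x, e⟫`. If `n` is a unit vector orthogonal
to `e` pointing along `w`, the equator point `z = x + r • n` satisfies
`‖y - z‖² = 2r(r - ‖w‖) ≤ 2h²`, since `r² - ‖w‖² = h²`; so `y` lies within `√2 |h|` of the
equator, and a point at distance `s` from it is at depth `δ = -h ≥ s / 2` below it. Shifting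
such a point up by `t` gives `‖y + t • e - x‖² = r² - 2tδ + t² ≤ r² - ts + t²`, which the
hypothesis on the exponents bounds by `r² - 2rρ ≤ (r - ρ)²` with `ρ = ε ^ a`.
-/

open Metric RealInnerProductSpace

section InnerProductSpace

variable {E : Type*} [NormedAddCommGroup E] [InnerProductSpace ℝ E]

def equatorAlong (x : E) (r : ℝ) (e : E) : Set E :=
  {z | z ∈ sphere x r ∧ ⟪z - x, e⟫ = 0}

theorem norm_add_smul_sq_of_norm_eq_one {e : E} (he : ‖e‖ = 1) (v : E) (t : ℝ) :
    ‖v + t • e‖ ^ 2 = ‖v‖ ^ 2 + 2 * t * ⟪v, e⟫ + t ^ 2 := by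
  rw [norm_add_sq_real, inner_smul_right, norm_smul, he, Real.norm_eq_abs, mul_one, sq_abs]
  ring

theorem exists_norm_eq_one_inner_eq_zero_inner_eq_norm {e u w : E} (hu : ‖u‖ = 1)
    (hue : ⟪u, e⟫ = 0) (hwe : ⟪w, e⟫ = 0) :
    ∃ n : E, ‖n‖ = 1 ∧ ⟪n, e⟫ = 0 ∧ ⟪w, n⟫ = ‖w‖ := by
  by_cases hw : w = 0
  · exact ⟨u, hu, hue, by simp [hw]⟩
  · refine ⟨‖w‖⁻¹ • w, norm_smul_inv_norm hw, by simp [inner_smul_left, hwe], ?_⟩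
    rw [inner_smul_right, real_inner_self_eq_norm_sq]
    field_simp

theorem infDist_equatorAlong_le {x y e u : E} {r : ℝ} (he : ‖e‖ = 1) (hu : ‖u‖ = 1)
    (hue : ⟪u, e⟫ = 0) (hy : y ∈ sphere x r) :
    infDist y (equatorAlong x r e) ≤ √2 * |⟪y - x, e⟫| := by
  set h := ⟪y - x, e⟫
  set w := y - x - h • e
  have hwe : ⟪w, e⟫ = 0 := by
    rw [inner_sub_left, real_inner_smul_left, real_inner_self_eq_norm_sq, he]
    ring
  have hr : ‖y - x‖ = r := by rwa [← dist_eq_norm, ← mem_sphere]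
  have hpyth : r ^ 2 = ‖w‖ ^ 2 + h ^ 2 := by
    rw [← hr, ← sub_add_cancel (y - x) (h • e), norm_add_smul_sq_of_norm_eq_one he, hwe]
    ring
  obtain ⟨n, hn, hne, hwn⟩ := exists_norm_eq_one_inner_eq_zero_inner_eq_norm hu hue hwe
  have hmem : x + r • n ∈ equatorAlong x r e := by
    refine ⟨?_, ?_⟩
    · rw [mem_sphere, dist_eq_norm, add_sub_cancel_left, norm_smul, hn, mul_one, ← hr]
      exact abs_norm _
    · rw [add_sub_cancel_left, inner_smul_left, hne, mul_zero]
  have hyn : ⟪y - x, n⟫ = ‖w‖ := by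
    rw [← sub_add_cancel (y - x) (h • e), inner_add_left, real_inner_smul_left,
      real_inner_comm n e, hne, hwn, mul_zero, add_zero]
  have hdist : dist y (x + r • n) ^ 2 = 2 * r * (r - ‖w‖) := by
    rw [dist_eq_norm, show y - (x + r • n) = y - x + (-r) • n by rw [neg_smul]; abel,
      norm_add_smul_sq_of_norm_eq_one hn, hr, hyn]
    ring
  have hwr : ‖w‖ ≤ r := by nlinarith [norm_nonneg w, sq_nonneg h, hr ▸ norm_nonneg (y - x)]
  calc infDist y (equatorAlong x r e) ≤ dist y (x + r • n) := infDist_le_dist_of_mem hmem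
    _ ≤ √(2 * h ^ 2) := Real.le_sqrt_of_sq_le (by nlinarith [norm_nonneg w])
    _ = √2 * |h| := by rw [Real.sqrt_mul zero_le_two, Real.sqrt_sq_eq_abs]

theorem le_sub_of_sq_le_sq_sub_two_mul {d r ρ : ℝ} (hd : 0 ≤ d) (hr : 0 < r)
    (h : d ^ 2 ≤ r ^ 2 - 2 * r * ρ) : d ≤ r - ρ := by
  have hρr : 0 ≤ r - ρ := by nlinarith
  exact (pow_le_pow_iff_left₀ hd hρr two_ne_zero).1 (by nlinarith [sq_nonneg ρ])

theorem add_smul_mem_closedBall_of_le_infDist_equatorAlong {x y e u : E} {r s t ρ : ℝ}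
    (he : ‖e‖ = 1) (hu : ‖u‖ = 1) (hue : ⟪u, e⟫ = 0) (hy : y ∈ sphere x r)
    (hsouth : ⟪y - x, e⟫ ≤ 0) (hs : 0 < s) (ht : 0 ≤ t)
    (hfar : s ≤ infDist y (equatorAlong x r e)) (hcond : 2 * r * ρ + t ^ 2 ≤ t * s) :
    y + t • e ∈ closedBall x (r - ρ) := by
  set δ := -⟪y - x, e⟫
  have hr : ‖y - x‖ = r := by rwa [← dist_eq_norm, ← mem_sphere]
  have hsδ : s ≤ 2 * δ := by
    have h := infDist_equatorAlong_le he hu hue hy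
    rw [abs_of_nonpos hsouth] at h
    have hsqrt2 : √2 ≤ 2 := Real.sqrt_le_iff.2 ⟨by norm_num, by norm_num⟩
    nlinarith
  have hδr : δ ≤ r := by
    have := abs_real_inner_le_norm (y - x) e
    rw [he, mul_one, hr] at this
    linarith [(abs_le.1 this).1]
  have hdist : dist (y + t • e) x ^ 2 = r ^ 2 - 2 * t * δ + t ^ 2 := by
    rw [dist_eq_norm, add_sub_right_comm, norm_add_smul_sq_of_norm_eq_one he, hr]
    ring
  refine mem_closedBall.2 (le_sub_of_sq_le_sq_sub_two_mul dist_nonneg (by linarith) ?_)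
  nlinarith

end InnerProductSpace

theorem equator_eq_equatorAlong (x : EuclideanSpace ℝ (Fin 3)) (r : ℝ) :
    equator x r = equatorAlong x r (EuclideanSpace.single 2 1) := by
  ext z
  simp [equator, equatorAlong, EuclideanSpace.inner_single_right, sub_eq_zero]

theorem southern_point_shift_general
    (x y : EuclideanSpace ℝ (Fin 3)) (r ε a b : ℝ)
    (hε : 0 < ε)
    (hcond : 2 * r * ε ^ a + ε ^ (2 * b) ≤ ε ^ b * ε ^ (b / 20))
    (hy : y ∈ Metric.sphere x r)
    (hsouth : y 2 ≤ x 2)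
    (hfar : ε ^ (b / 20) ≤ Metric.infDist y (equator x r)) :
    y + EuclideanSpace.single 2 (ε ^ b) ∈ Metric.closedBall x (r - ε ^ a) := by
  have hshift : (EuclideanSpace.single 2 (ε ^ b) : EuclideanSpace ℝ (Fin 3)) =
      ε ^ b • EuclideanSpace.single 2 1 := by
    ext i
    simp
  have hsq : ε ^ (2 * b) = (ε ^ b) ^ 2 := by
    rw [mul_comm, Real.rpow_mul hε.le, Real.rpow_two]
  rw [equator_eq_equatorAlong] at hfar
  rw [hshift]
  refine add_smul_mem_closedBall_of_le_infDist_equatorAlong (u := EuclideanSpace.single 0 1)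
    (by simp) (by simp) (by simp [EuclideanSpace.inner_single_left]) hy ?_
    (Real.rpow_pos_of_pos hε _) (Real.rpow_nonneg hε.le _) hfar (by rwa [← hsq])
  simpa [EuclideanSpace.inner_single_right] using hsouth

/-- A point on the southern hemisphere of `∂B(x,r)` at distance at least
`ε^(b/20)` from the equator, shifted upward by `(0,0,ε^b)`, lies in the smaller
ball `B(x, r - ε^a)`. -/
theorem southern_point_shift
    (x y : EuclideanSpace ℝ (Fin 3)) (r ε a b : ℝ)
    (hb : (10 : ℝ) ^ 6 ≤ b) (hab : b < a)
    (hε : 0 < ε) (hεr : ε < r / 10 ^ 5)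
    (hcond : 2 * r * ε ^ a + ε ^ (2 * b) ≤ ε ^ b * ε ^ (b / 20))
    (hy : y ∈ Metric.sphere x r)
    (hsouth : y 2 ≤ x 2)
    (hfar : ε ^ (b / 20) ≤ Metric.infDist y (equator x r)) :
    y + EuclideanSpace.single 2 (ε ^ b) ∈ Metric.closedBall x (r - ε ^ a) :=
  southern_point_shift_general x y r ε a b hε hcond hy hsouth hfar
end

section
/- Let h : (0,1) → ℝ⁺ be a function and let g(x) = h(|x|), and suppose that for all x with 0 < |x| < 1/10 and all scalars s > 0 one has g(2x)/g(x) = g(2sx)/g(sx) whenever all four points lie in the domain. Suppose further that for each r ∈ [0, 1], h(2^(−r)·2^(−n))/h(2^(−n)) → 2^(r(3−β)) as n → ∞, for a fixed β ∈ (1, 3). If additionally h is continuous, then there exists b₁ > 0 such that h(t)·t^(3−β) → b₁ as t → 0. -/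
open Filter

/-- Scale-consistency of the one-point function forces the leading asymptotic
`g(x) ~ b₁ |x|^(-(3-β))` as `x → 0`. -/
theorem onePoint_asymptotics (β : ℝ) (hβ : β ∈ Set.Ioo (1 : ℝ) 3)
    (h : ℝ → ℝ) (g : EuclideanSpace ℝ (Fin 3) → ℝ)
    (hpos : ∀ t ∈ Set.Ioo (0 : ℝ) 1, 0 < h t)
    (hcont : ContinuousOn h (Set.Ioo (0 : ℝ) 1))
    (hrot : ∀ x : EuclideanSpace ℝ (Fin 3), 0 < ‖x‖ → ‖x‖ < 1 → g x = h ‖x‖)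
    (hscale : ∀ (x : EuclideanSpace ℝ (Fin 3)) (s : ℝ), 0 < ‖x‖ → ‖x‖ < 1 / 10 →
      0 < s → ‖s • x‖ < 1 → ‖(2 : ℝ) • x‖ < 1 → ‖(2 * s) • x‖ < 1 →
      g ((2 : ℝ) • x) / g x = g ((2 * s) • x) / g (s • x))
    (hlim : ∀ r ∈ Set.Icc (0 : ℝ) 1,
      Tendsto (fun n : ℕ => h ((2 : ℝ) ^ (-r) * 2 ^ (-(n : ℝ))) / h ((2 : ℝ) ^ (-(n : ℝ))))
        atTop (nhds ((2 : ℝ) ^ (r * (3 - β))))) :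
    ∃ b₁ : ℝ, 0 < b₁ ∧
      Tendsto (fun t : ℝ => h t * t ^ (3 - β)) (nhdsWithin 0 (Set.Ioi 0)) (nhds b₁) := by
  have two_pos' : (0:ℝ) < 2 := by norm_num
  have hp : ∀ t : ℝ, 0 < t → t < 1 → 0 < h t := fun t h1 h2 => hpos t ⟨h1, h2⟩
  -- basic rpow facts
  have ppos : ∀ y : ℝ, 0 < (2:ℝ) ^ y := fun y => Real.rpow_pos_of_pos two_pos' y
  have plt1 : ∀ y : ℝ, 0 < y → (2:ℝ) ^ (-y) < 1 := fun y hy =>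
    Real.rpow_lt_one_of_one_lt_of_neg (by norm_num) (by linarith)
  have ple1 : ∀ y : ℝ, 0 ≤ y → (2:ℝ) ^ (-y) ≤ 1 := fun y hy =>
    Real.rpow_le_one_of_one_le_of_nonpos (by norm_num) (by linarith)
  have hmul : ∀ p q : ℝ, (2:ℝ) ^ p * (2:ℝ) ^ q = (2:ℝ) ^ (p + q) :=
    fun p q => (Real.rpow_add two_pos' p q).symm
  have p1 : (2:ℝ) ^ (-(1:ℝ)) = 1/2 := by
    rw [show (-(1:ℝ)) = ((-1:ℤ):ℝ) by norm_num, Real.rpow_intCast]; norm_num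
  have p2 : (2:ℝ) ^ (-(2:ℝ)) = 1/4 := by
    rw [show (-(2:ℝ)) = ((-2:ℤ):ℝ) by norm_num, Real.rpow_intCast]; norm_num
  -- the reference vector
  set x₀ : EuclideanSpace ℝ (Fin 3) := EuclideanSpace.single (0 : Fin 3) (1/20 : ℝ) with hx₀
  have hxn : ‖x₀‖ = 1/20 := by
    rw [hx₀, EuclideanSpace.norm_single]
    norm_num [Real.norm_eq_abs]
  -- Step 1: the ratio h(2a)/h(a) is independent of a on (0, 1/2)
  have base : ∀ a : ℝ, 0 < a → a < 1/2 → h (2*a) / h a = h (1/10) / h (1/20) := by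
    intro a ha0 ha2
    have hs0 : (0:ℝ) < 20*a := by linarith
    have n0 : ‖(20*a) • x₀‖ = a := by
      rw [norm_smul, hxn, Real.norm_eq_abs, abs_of_pos hs0]; ring
    have n1 : ‖(2:ℝ) • x₀‖ = 1/10 := by
      rw [norm_smul, hxn]; norm_num
    have n2 : ‖(2*(20*a)) • x₀‖ = 2*a := by
      rw [norm_smul, hxn, Real.norm_eq_abs, abs_of_pos (by linarith : (0:ℝ) < 2*(20*a))]; ring
    have H := hscale x₀ (20*a) (by rw [hxn]; norm_num) (by rw [hxn]; norm_num) hs0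
      (by rw [n0]; linarith) (by rw [n1]; norm_num) (by rw [n2]; linarith)
    rw [hrot ((2:ℝ) • x₀) (by rw [n1]; norm_num) (by rw [n1]; norm_num), n1,
        hrot x₀ (by rw [hxn]; norm_num) (by rw [hxn]; norm_num), hxn,
        hrot ((2*(20*a)) • x₀) (by rw [n2]; linarith) (by rw [n2]; linarith), n2,
        hrot ((20*a) • x₀) (by rw [n0]; linarith) (by rw [n0]; linarith), n0] at H
    exact H.symm
  set c : ℝ := h (1/10) / h (1/20) with hc
  have hc_pos : 0 < c :=
    div_pos (hp _ (by norm_num) (by norm_num)) (hp _ (by norm_num) (by norm_num))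
  have key : ∀ a : ℝ, 0 < a → a < 1/2 → h (2*a) = c * h a := by
    intro a ha0 ha2
    have hb := base a ha0 ha2
    rw [hc]
    exact (div_eq_iff (ne_of_gt (hp a ha0 (by linarith)))).1 hb
  -- Step 2: consequences of `key` at dyadic points
  have keyn : ∀ r : ℝ, 0 ≤ r → ∀ n : ℕ, 1 ≤ n →
      h ((2:ℝ)^(-r) * 2^(-((n:ℝ)+1))) * c = h ((2:ℝ)^(-r) * 2^(-(n:ℝ))) := by
    intro r hr n hn
    have ha0 : 0 < (2:ℝ)^(-r) * 2^(-((n:ℝ)+1)) := mul_pos (ppos _) (ppos _)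
    have ha2 : (2:ℝ)^(-r) * 2^(-((n:ℝ)+1)) < 1/2 := by
      have h1 : (2:ℝ)^(-r) ≤ 1 := ple1 r hr
      have h2 : (2:ℝ)^(-((n:ℝ)+1)) ≤ (2:ℝ)^(-(2:ℝ)) := by
        apply (Real.rpow_le_rpow_left_iff (by norm_num : (1:ℝ) < 2)).2
        have : (1:ℝ) ≤ (n:ℝ) := by exact_mod_cast hn
        linarith
      rw [p2] at h2
      have := mul_le_mul h1 h2 (le_of_lt (ppos _)) zero_le_one
      rw [one_mul] at this
      linarith
    have hk := key _ ha0 ha2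
    have h2eq : 2 * ((2:ℝ)^(-r) * 2^(-((n:ℝ)+1))) = (2:ℝ)^(-r) * 2^(-(n:ℝ)) := by
      rw [mul_left_comm]
      congr 1
      nth_rewrite 1 [show (2:ℝ) = (2:ℝ)^(1:ℝ) from (Real.rpow_one 2).symm]
      rw [hmul]
      congr 1
      ring
    rw [h2eq] at hk
    linarith [hk]
  have keyd : ∀ n : ℕ, 1 ≤ n →
      h ((2:ℝ)^(-((n:ℝ)+1))) * c = h ((2:ℝ)^(-(n:ℝ))) := by
    intro n hn
    have ha0 : 0 < (2:ℝ)^(-((n:ℝ)+1)) := ppos _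
    have ha2 : (2:ℝ)^(-((n:ℝ)+1)) < 1/2 := by
      have h2 : (2:ℝ)^(-((n:ℝ)+1)) ≤ (2:ℝ)^(-(2:ℝ)) := by
        apply (Real.rpow_le_rpow_left_iff (by norm_num : (1:ℝ) < 2)).2
        have : (1:ℝ) ≤ (n:ℝ) := by exact_mod_cast hn
        linarith
      rw [p2] at h2
      linarith
    have hk := key _ ha0 ha2
    have h2eq : 2 * (2:ℝ)^(-((n:ℝ)+1)) = (2:ℝ)^(-(n:ℝ)) := by
      nth_rewrite 1 [show (2:ℝ) = (2:ℝ)^(1:ℝ) from (Real.rpow_one 2).symm]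
      rw [hmul]
      congr 1
      ring
    rw [h2eq] at hk
    linarith [hk]
  -- Step 3: the ratio sequence in `hlim` is constant for n ≥ 1
  have Hconst : ∀ r : ℝ, 0 ≤ r → ∀ n : ℕ, 1 ≤ n →
      h ((2:ℝ)^(-r) * 2^(-(n:ℝ))) / h ((2:ℝ)^(-(n:ℝ))) =
      h ((2:ℝ)^(-r) * 2^(-(1:ℝ))) / h ((2:ℝ)^(-(1:ℝ))) := by
    intro r hr
    refine Nat.le_induction ?_ ?_
    · norm_num
    · intro n hn ih
      push_cast
      rw [show h ((2:ℝ)^(-r) * 2^(-((n:ℝ)+1))) / h ((2:ℝ)^(-((n:ℝ)+1))) =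
            (h ((2:ℝ)^(-r) * 2^(-((n:ℝ)+1))) * c) / (h ((2:ℝ)^(-((n:ℝ)+1))) * c) from
          (mul_div_mul_right _ _ (ne_of_gt hc_pos)).symm,
        keyn r hr n hn, keyd n hn]
      exact ih
  have hpos1 : 0 < h ((2:ℝ)^(-(1:ℝ))) := hp _ (ppos _) (plt1 1 one_pos)
  -- Step 4: identify the constant value from the limit
  have Hval : ∀ r ∈ Set.Icc (0:ℝ) 1,
      h ((2:ℝ)^(-r) * 2^(-(1:ℝ))) / h ((2:ℝ)^(-(1:ℝ))) = (2:ℝ)^(r*(3-β)) := by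
    intro r hr
    have T1 := hlim r hr
    have T2 : Tendsto (fun n : ℕ => h ((2:ℝ)^(-r) * 2^(-(n:ℝ))) / h ((2:ℝ)^(-(n:ℝ)))) atTop
        (nhds (h ((2:ℝ)^(-r) * 2^(-(1:ℝ))) / h ((2:ℝ)^(-(1:ℝ))))) := by
      apply Filter.Tendsto.congr' _ tendsto_const_nhds
      filter_upwards [eventually_ge_atTop 1] with n hn
      exact (Hconst r hr.1 n hn).symm
    exact tendsto_nhds_unique T2 T1
  have Hratio : ∀ r : ℝ, 0 ≤ r → r ≤ 1 → ∀ n : ℕ, 1 ≤ n →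
      h ((2:ℝ)^(-r) * 2^(-(n:ℝ))) = (2:ℝ)^(r*(3-β)) * h ((2:ℝ)^(-(n:ℝ))) := by
    intro r hr0 hr1 n hn
    have hcn : h ((2:ℝ)^(-r) * 2^(-(n:ℝ))) / h ((2:ℝ)^(-(n:ℝ))) = (2:ℝ)^(r*(3-β)) := by
      rw [Hconst r hr0 n hn]; exact Hval r ⟨hr0, hr1⟩
    have hnpos : (0:ℝ) < (n:ℝ) := by exact_mod_cast Nat.lt_of_lt_of_le Nat.zero_lt_one hn
    exact (div_eq_iff (ne_of_gt (hp _ (ppos _) (plt1 _ hnpos)))).1 hcn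
  -- Step 5: identify c
  have hcmul : c * (2:ℝ)^(3-β) = 1 := by
    have V := Hval 1 ⟨zero_le_one, le_refl 1⟩
    have e1 : (2:ℝ)^(-(1:ℝ)) * (2:ℝ)^(-(1:ℝ)) = (2:ℝ)^(-((1:ℝ)+1)) := by
      rw [hmul]; congr 1; ring
    rw [e1] at V
    have K := keyd 1 le_rfl
    have cast1 : ((1:ℕ):ℝ) = (1:ℝ) := by norm_num
    rw [cast1] at K
    have hA : h ((2:ℝ)^(-((1:ℝ)+1))) = (2:ℝ)^(1*(3-β)) * h ((2:ℝ)^(-(1:ℝ))) :=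
      (div_eq_iff (ne_of_gt hpos1)).1 V
    rw [hA] at K
    have e2 : (2:ℝ)^(1*(3-β)) = (2:ℝ)^(3-β) := by norm_num
    rw [e2] at K
    apply mul_right_cancel₀ (ne_of_gt hpos1)
    rw [one_mul]
    linear_combination K
  -- Step 6: value of h at 2^(-n)
  have Hn : ∀ n : ℕ, 1 ≤ n →
      h ((2:ℝ)^(-(n:ℝ))) = (2:ℝ)^((3-β)*((n:ℝ)-1)) * h ((2:ℝ)^(-(1:ℝ))) := by
    refine Nat.le_induction ?_ ?_
    · have cast1 : ((1:ℕ):ℝ) = (1:ℝ) := by norm_num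
      rw [cast1, show (3-β)*((1:ℝ)-1) = 0 by ring, Real.rpow_zero, one_mul]
    · intro n hn ih
      push_cast
      have K := keyd n hn
      have e : (2:ℝ)^((3-β)*((n:ℝ)-1)) * (2:ℝ)^(3-β) = (2:ℝ)^((3-β)*((n:ℝ)+1-1)) := by
        rw [hmul]; congr 1; ring
      calc h ((2:ℝ)^(-((n:ℝ)+1)))
          = h ((2:ℝ)^(-((n:ℝ)+1))) * (c * (2:ℝ)^(3-β)) := by rw [hcmul, mul_one]
        _ = (h ((2:ℝ)^(-((n:ℝ)+1))) * c) * (2:ℝ)^(3-β) := by ring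
        _ = ((2:ℝ)^((3-β)*((n:ℝ)-1)) * h ((2:ℝ)^(-(1:ℝ)))) * (2:ℝ)^(3-β) := by rw [K, ih]
        _ = ((2:ℝ)^((3-β)*((n:ℝ)-1)) * (2:ℝ)^(3-β)) * h ((2:ℝ)^(-(1:ℝ))) := by ring
        _ = (2:ℝ)^((3-β)*((n:ℝ)+1-1)) * h ((2:ℝ)^(-(1:ℝ))) := by rw [e]
  -- Step 7: h t * t^(3-β) is constant on (0, 1/2]
  refine ⟨h ((2:ℝ)^(-(1:ℝ))) * (2:ℝ)^(-(3-β)), mul_pos hpos1 (ppos _), ?_⟩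
  have Hφ : ∀ t : ℝ, 0 < t → t ≤ 1/2 →
      h t * t^(3-β) = h ((2:ℝ)^(-(1:ℝ))) * (2:ℝ)^(-(3-β)) := by
    intro t ht0 ht2
    set y : ℝ := -Real.logb 2 t with hy
    have hty : t = (2:ℝ)^(-y) := by
      rw [hy, neg_neg, Real.rpow_logb two_pos' (by norm_num) ht0]
    have hy1 : (1:ℝ) ≤ y := by
      have h1 : (2:ℝ)^(Real.logb 2 t) ≤ (2:ℝ)^(-(1:ℝ)) := by
        rw [Real.rpow_logb two_pos' (by norm_num) ht0, p1]; exact ht2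
      have := (Real.rpow_le_rpow_left_iff (by norm_num : (1:ℝ) < 2)).1 h1
      rw [hy]; linarith
    set n : ℕ := ⌊y⌋₊ with hn
    have hn1 : 1 ≤ n := Nat.le_floor (by exact_mod_cast hy1)
    set r : ℝ := y - (n:ℝ) with hr
    have hr0 : 0 ≤ r := sub_nonneg.2 (Nat.floor_le (by linarith))
    have hr1 : r ≤ 1 := by
      have := Nat.lt_floor_add_one y
      rw [hr]; push_cast; linarith
    have hsplit : (2:ℝ)^(-y) = (2:ℝ)^(-r) * (2:ℝ)^(-(n:ℝ)) := by
      rw [hmul]; congr 1; rw [hr]; ring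
    have H1 := Hratio r hr0 hr1 n hn1
    have H2 := Hn n hn1
    rw [hty, hsplit, H1, H2, ← hsplit, ← Real.rpow_mul (by norm_num : (0:ℝ) ≤ 2)]
    have comb : (2:ℝ)^(r*(3-β)) * ((2:ℝ)^((3-β)*((n:ℝ)-1)) * (2:ℝ)^((-y)*(3-β)))
        = (2:ℝ)^(-(3-β)) := by
      rw [hmul, hmul]; congr 1; rw [hr]; ring
    calc (2:ℝ)^(r*(3-β)) * ((2:ℝ)^((3-β)*((n:ℝ)-1)) * h ((2:ℝ)^(-(1:ℝ)))) * (2:ℝ)^((-y)*(3-β))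
        = h ((2:ℝ)^(-(1:ℝ))) *
          ((2:ℝ)^(r*(3-β)) * ((2:ℝ)^((3-β)*((n:ℝ)-1)) * (2:ℝ)^((-y)*(3-β)))) := by ring
      _ = h ((2:ℝ)^(-(1:ℝ))) * (2:ℝ)^(-(3-β)) := by rw [comb]
  have hmem : Set.Ioc (0:ℝ) (1/2) ∈ nhdsWithin (0:ℝ) (Set.Ioi 0) :=
    Ioc_mem_nhdsGT_of_mem ⟨le_refl 0, by norm_num⟩
  refine Filter.Tendsto.congr' ?_ tendsto_const_nhds
  filter_upwards [hmem] with t ht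
  exact (Hφ t ht.1 ht.2).symm
end
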